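/- arXiv:0812.3014 — 3 statements merged into one kernel-verified Lean document; each statement's English description precedes it below -/
import Mathlib

section
/- Let K be a field and E/K an elliptic curve whose endomorphism ring End(E) is a free Z-module of rank 2 (i.e., E has complex multiplication over K). If the group E(K) of K-rational points is finitely generated, then the rank of E(K) as a Z-module is even. -/
/-!
`ℚ ⊗[ℤ] R` is a localization of the domain `R`, hence has no zero divisors, and its
`ℚ`-dimension is the `ℤ`-rank of `R`; being finite-dimensional it is a field `F` of degree
`finrank ℤ R` over `ℚ`. The action of `R` on `M` makes `ℚ ⊗[ℤ] M` a vector space over `F`,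
so by the tower law its `ℚ`-dimension, which is the `ℤ`-rank of `M`, is a multiple of
`finrank ℤ R`.
-/

open TensorProduct Module

theorem Module.finrank_dvd_finrank_of_algHom_end {k D V : Type*} [Field k] [DivisionRing D]
    [Algebra k D] [AddCommGroup V] [Module k V] (φ : D →ₐ[k] Module.End k V) :
    finrank k D ∣ finrank k V := by
  let _ : Module D V := Module.compHom V φ.toRingHom
  have : IsScalarTower k D V := ⟨fun c d v => by
    change φ (c • d) v = c • φ d v
    rw [map_smul, LinearMap.smul_apply]⟩
  exact finrank_dvd_finrank_right k D V

noncomputable def TensorProduct.baseChangeEndHom (k A R M : Type*) [CommRing k] [CommRing A]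
    [Algebra k A] [Ring R] [Algebra k R] [AddCommGroup M] [Module k M] [Module R M]
    [IsScalarTower k R M] : A ⊗[k] R →ₐ[A] Module.End A (A ⊗[k] M) :=
  AlgHom.liftEquiv k A R _ ((Module.End.baseChangeHom k A M).comp (Algebra.lsmul k k M))

theorem finrank_rat_tensorProduct (M : Type*) [AddCommGroup M] :
    finrank ℚ (ℚ ⊗[ℤ] M) = finrank ℤ M :=
  (TensorProduct.isBaseChange ℤ M ℚ).finrank_eq

attribute [local instance] Algebra.TensorProduct.rightAlgebra in
theorem isField_rat_tensorProduct_of_finrank_pos (R : Type*) [CommRing R] [NoZeroDivisors R]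
    (hR : 0 < finrank ℤ R) : IsField (ℚ ⊗[ℤ] R) := by
  rw [← finrank_rat_tensorProduct] at hR
  have : FiniteDimensional ℚ (ℚ ⊗[ℤ] R) := Module.finite_of_finrank_pos hR
  have : Nontrivial (ℚ ⊗[ℤ] R) := Module.nontrivial_of_finrank_pos hR
  have : NoZeroDivisors (ℚ ⊗[ℤ] R) :=
    IsLocalization.noZeroDivisors (Algebra.algebraMapSubmonoid R (nonZeroDivisors ℤ))
  have : IsDomain (ℚ ⊗[ℤ] R) := NoZeroDivisors.to_isDomain _
  exact (fieldOfFiniteDimensional ℚ (ℚ ⊗[ℤ] R)).toIsField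

theorem finrank_int_dvd_finrank_int (R M : Type*) [CommRing R] [NoZeroDivisors R]
    [AddCommGroup M] [Module R M] (hR : 0 < finrank ℤ R) :
    finrank ℤ R ∣ finrank ℤ M := by
  let _ := (isField_rat_tensorProduct_of_finrank_pos R hR).toField
  simpa only [finrank_rat_tensorProduct] using
    finrank_dvd_finrank_of_algHom_end (TensorProduct.baseChangeEndHom ℤ ℚ R M)

open scoped Classical in
theorem stmt_0_general (K : Type*) [Field K] (W : WeierstrassCurve.Affine K)
    (R : Type*) [CommRing R] [IsDomain R]
    (hR : Module.finrank ℤ R = 2)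
    [Module R W.Point] :
    Even (Module.finrank ℤ W.Point) :=
  even_iff_two_dvd.mpr (hR ▸ finrank_int_dvd_finrank_int R W.Point (by omega))

open scoped Classical in
/-- Let `K` be a field and `E/K` an elliptic curve whose endomorphism ring
`End(E)` is a free `ℤ`-module of rank 2 (i.e. `E` has complex multiplication over `K`;
`End(E)` is an integral domain acting on the group of points `E(K)`, which we encode as a
module structure of an abstract such ring `R` on `E(K)`). If the group `E(K)` of
`K`-rational points is finitely generated, then the rank of `E(K)` as a `ℤ`-module is
even. -/
theorem stmt_0 (K : Type*) [Field K] (W : WeierstrassCurve.Affine K) (hΔ : W.Δ ≠ 0)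
    (R : Type*) [CommRing R] [IsDomain R] [Module.Free ℤ R]
    (hR : Module.finrank ℤ R = 2)
    [Module R W.Point]
    (hfg : Module.Finite ℤ W.Point) :
    Even (Module.finrank ℤ W.Point) :=
  stmt_0_general K W R hR
end

section
/- Let p1, ..., pm be distinct points in the complex projective plane P^2 with m ≤ 9, no four of them collinear and no seven lying on a common conic. Let φ: C[z0,z1,z2]_2 → C^m be the evaluation map of quadratic forms at the points pi (with respect to fixed affine representatives). Then the cokernel of φ has dimension m - 6 if m ≥ 7; dimension 0 if m ≤ 5; and for m = 6 the cokernel has dimension 1 if all six points lie on a conic and dimension 0 otherwise. -/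
/-!
Given at most five points, no four on a line, and one of them `x`, a conic through the others
that misses `x` is found as a pair of lines: the other (at most four) points split into two groups
of at most two, each spanning a line that misses `x`. Such a split exists because two of these
lines through a common point that both contained `x` would coincide, putting four points on a
line. Hence evaluation is onto for `m ≤ 5`; for `m = 6` the kernel lies in the one-dimensional
kernel for the first five points; for `m ≥ 7` it is trivial since no seven points lie on a conic.
Rank–nullity with `dim ℂ[z₀,z₁,z₂]₂ = 6` gives the cokernel dimensions.
-/

/-- Evaluation of homogeneous quadratic forms in `ℂ[z₀, z₁, z₂]` at the (affine
representatives of the) `m` points `p 0, …, p (m-1)`, as a linear map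
`ℂ[z₀,z₁,z₂]₂ → ℂ^m`. -/
noncomputable def evalMap (m : ℕ) (p : Fin m → (Fin 3 → ℂ)) :
    (MvPolynomial.homogeneousSubmodule (Fin 3) ℂ 2) →ₗ[ℂ] (Fin m → ℂ) :=
  (LinearMap.pi fun i => (MvPolynomial.aeval (p i)).toLinearMap) ∘ₗ
    (MvPolynomial.homogeneousSubmodule (Fin 3) ℂ 2).subtype

open MvPolynomial Module Submodule LinearMap

section LinearForms

variable {σ K : Type*} [Fintype σ] [DecidableEq σ] [CommSemiring K]

noncomputable def linearFormPoly (f : (σ → K) →ₗ[K] K) : MvPolynomial σ K :=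
  ∑ j, C (f (Pi.single j 1)) * X j

variable (f : (σ → K) →ₗ[K] K)

@[simp]
lemma eval_linearFormPoly (v : σ → K) : eval v (linearFormPoly f) = f v := by
  conv_rhs => rw [pi_eq_sum_univ' v]
  simp [linearFormPoly, mul_comm]

lemma isHomogeneous_linearFormPoly : (linearFormPoly f).IsHomogeneous 1 :=
  IsHomogeneous.sum _ _ _ fun j _ => (isHomogeneous_X K j).C_mul _

lemma linearFormPoly_ne_zero {f : (σ → K) →ₗ[K] K} (hf : f ≠ 0) : linearFormPoly f ≠ 0 := by
  contrapose! hf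
  refine LinearMap.ext fun v => ?_
  simpa using congrArg (eval v) hf

end LinearForms

lemma exists_quadric_of_notMem_span {σ K : Type*} [Fintype σ] [DecidableEq σ] [Field K]
    {S₁ S₂ : Set (σ → K)} {x : σ → K} (h₁ : x ∉ span K S₁) (h₂ : x ∉ span K S₂) :
    ∃ q : MvPolynomial σ K, q.IsHomogeneous 2 ∧ eval x q ≠ 0 ∧ ∀ v ∈ S₁ ∪ S₂, eval v q = 0 := by
  obtain ⟨f₁, hf₁x, hf₁⟩ := exists_le_ker_of_notMem h₁
  obtain ⟨f₂, hf₂x, hf₂⟩ := exists_le_ker_of_notMem h₂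
  refine ⟨linearFormPoly f₁ * linearFormPoly f₂,
    (isHomogeneous_linearFormPoly f₁).mul (isHomogeneous_linearFormPoly f₂),
    by simpa using mul_ne_zero hf₁x hf₂x, ?_⟩
  rintro v (hv | hv)
  · simp [LinearMap.mem_ker.mp (hf₁ (subset_span hv))]
  · simp [LinearMap.mem_ker.mp (hf₂ (subset_span hv))]

section PointsInGeneralPosition

variable {K V ι : Type*} [Field K] [AddCommGroup V] [Module K V] {p : ι → V}

lemma eq_of_mem_span_pair_of_mem_span_pair
    (hdist : ∀ i j, i ≠ j → p j ∉ K ∙ p i)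
    (hfour : ∀ s : Finset ι, s.card = 4 → 2 < finrank K (span K (p '' s)))
    {i a b c : ι} (ha : a ≠ i) (hb : b ≠ i) (hc : c ≠ i)
    (hab : p i ∈ span K {p a, p b}) (hac : p i ∈ span K {p a, p c}) : b = c := by
  classical
  by_contra hbc
  have hia : p i ∉ K ∙ p a := hdist a i ha
  have hab' : a ≠ b := by rintro rfl; exact hia (by simpa using hab)
  have hac' : a ≠ c := by rintro rfl; exact hia (by simpa using hac)
  rw [Set.pair_comm] at hab hac
  have hb' : p b ∈ span K {p i, p a} := mem_span_insert_exchange hab hia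
  have hc' : p c ∈ span K {p i, p a} := mem_span_insert_exchange hac hia
  have hle : span K (p '' ↑({a, b, c, i} : Finset ι)) ≤ span K {p i, p a} := by
    refine span_le.mpr ?_
    rintro _ ⟨j, hj, rfl⟩
    simp only [Finset.coe_insert, Finset.coe_singleton, Set.mem_insert_iff,
      Set.mem_singleton_iff] at hj
    rcases hj with rfl | rfl | rfl | rfl
    · exact subset_span (by simp)
    · exact hb'
    · exact hc'
    · exact subset_span (by simp)
  have h4 := hfour {a, b, c, i}
    (Finset.card_eq_four.mpr ⟨a, b, c, i, hab', hac', ha, hbc, hb, hc, rfl⟩)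
  have h2 : finrank K (span K {p i, p a}) ≤ 2 :=
    (finrank_span_le_card ({p i, p a} : Set V)).trans
      (by rw [Set.toFinset_insert, Set.toFinset_singleton]; exact Finset.card_le_two)
  have : FiniteDimensional K (span K {p i, p a}) :=
    FiniteDimensional.span_of_finite K (Set.toFinite _)
  have := Submodule.finrank_mono hle
  omega

lemma exists_span_cover_of_card_le_four (hne : ∀ i, p i ≠ 0)
    (hdist : ∀ i j, i ≠ j → p j ∉ K ∙ p i)
    (hfour : ∀ s : Finset ι, s.card = 4 → 2 < finrank K (span K (p '' s)))
    {i : ι} {s : Finset ι} (his : i ∉ s) (hs : s.card ≤ 4) :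
    ∃ S₁ S₂ : Set V, (∀ j ∈ s, p j ∈ S₁ ∪ S₂) ∧ p i ∉ span K S₁ ∧ p i ∉ span K S₂ := by
  classical
  have h0 : p i ∉ span K ∅ := by simpa using hne i
  interval_cases hcard : s.card
  · exact ⟨∅, ∅, by simp_all, h0, h0⟩
  · obtain ⟨a, rfl⟩ := Finset.card_eq_one.mp hcard
    simp only [Finset.mem_singleton, @eq_comm _ i] at his
    exact ⟨{p a}, ∅, by simp, hdist a i his, h0⟩
  · obtain ⟨a, b, -, rfl⟩ := Finset.card_eq_two.mp hcard
    simp only [Finset.mem_insert, Finset.mem_singleton, not_or, @eq_comm _ i] at his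
    obtain ⟨hia, hib⟩ := his
    exact ⟨{p a}, {p b}, by simp, hdist a i hia, hdist b i hib⟩
  · obtain ⟨a, b, c, -, -, hbc, rfl⟩ := Finset.card_eq_three.mp hcard
    simp only [Finset.mem_insert, Finset.mem_singleton, not_or, @eq_comm _ i] at his
    obtain ⟨hia, hib, hic⟩ := his
    by_cases hab : p i ∈ span K {p a, p b}
    · refine ⟨{p a, p c}, {p b}, by simp, fun hac => hbc ?_, hdist b i hib⟩
      exact eq_of_mem_span_pair_of_mem_span_pair hdist hfour hia hib hic hab hac
    · exact ⟨{p a, p b}, {p c}, by simp, hab, hdist c i hic⟩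
  · obtain ⟨a, b, c, d, -, -, had, hbc, -, -, rfl⟩ := Finset.card_eq_four.mp hcard
    simp only [Finset.mem_insert, Finset.mem_singleton, not_or, @eq_comm _ i] at his
    obtain ⟨hia, hib, hic, hid⟩ := his
    -- A pair from `{a, b}, {c, d}` and a pair from `{a, c}, {b, d}` always share a point.
    by_cases h : p i ∈ span K {p a, p b} ∨ p i ∈ span K {p c, p d}
    · refine ⟨{p a, p c}, {p b, p d}, by simp, fun hac => ?_, fun hbd => ?_⟩
      · rcases h with hab | hcd
        · exact hbc (eq_of_mem_span_pair_of_mem_span_pair hdist hfour hia hib hic hab hac)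
        · rw [Set.pair_comm] at hac
          exact had (eq_of_mem_span_pair_of_mem_span_pair hdist hfour hic hia hid hac hcd)
      · rcases h with hab | hcd
        · rw [Set.pair_comm] at hab
          exact had (eq_of_mem_span_pair_of_mem_span_pair hdist hfour hib hia hid hab hbd)
        · rw [Set.pair_comm] at hcd hbd
          exact hbc (eq_of_mem_span_pair_of_mem_span_pair hdist hfour hid hic hib hcd hbd).symm
    · push Not at h
      exact ⟨{p a, p b}, {p c, p d}, by simp, h.1, h.2⟩

end PointsInGeneralPosition

lemma exists_quadric_of_card_le_four {σ K ι : Type*} [Fintype σ] [DecidableEq σ] [Field K]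
    {p : ι → σ → K} (hne : ∀ i, p i ≠ 0) (hdist : ∀ i j, i ≠ j → p j ∉ K ∙ p i)
    (hfour : ∀ s : Finset ι, s.card = 4 → 2 < finrank K (span K (p '' s)))
    {i : ι} {s : Finset ι} (his : i ∉ s) (hs : s.card ≤ 4) :
    ∃ q : MvPolynomial σ K, q.IsHomogeneous 2 ∧ eval (p i) q ≠ 0 ∧ ∀ j ∈ s, eval (p j) q = 0 := by
  obtain ⟨S₁, S₂, hcover, h₁, h₂⟩ := exists_span_cover_of_card_le_four hne hdist hfour his hs
  obtain ⟨q, hq, hqi, hqS⟩ := exists_quadric_of_notMem_span h₁ h₂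
  exact ⟨q, hq, hqi, fun j hj => hqS _ (hcover j hj)⟩

lemma two_lt_finrank_span_image_of_no_vanishing_linear_form {K ι : Type*} [Field K]
    {p : ι → Fin 3 → K}
    (h : ¬ ∃ (s : Finset ι) (l : MvPolynomial (Fin 3) K),
      s.card = 4 ∧ l ≠ 0 ∧ l.IsHomogeneous 1 ∧ ∀ i ∈ s, eval (p i) l = 0)
    (s : Finset ι) (hs : s.card = 4) : 2 < finrank K (span K (p '' s)) := by
  by_contra hle
  have hlt : span K (p '' s) < ⊤ := lt_top_iff_ne_top.mpr fun htop => by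
    rw [htop, finrank_top, finrank_fin_fun] at hle
    omega
  obtain ⟨f, hf, hker⟩ := exists_le_ker_of_lt_top _ hlt
  refine h ⟨s, linearFormPoly f, hs, linearFormPoly_ne_zero hf, isHomogeneous_linearFormPoly f,
    fun i hi => ?_⟩
  simpa using hker (subset_span ⟨i, hi, rfl⟩)

theorem finrank_homogeneousSubmodule {σ K : Type*} [Fintype σ] [DecidableEq σ] [Field K]
    (n : ℕ) : finrank K (homogeneousSubmodule σ K n) = (Fintype.card σ + n - 1).choose n := by
  have hdeg : {d : σ →₀ ℕ | d.degree = n} = ↑((Finset.univ : Finset σ).finsuppAntidiag n) := by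
    ext d
    simp [Finset.mem_finsuppAntidiag, Finsupp.degree_eq_sum]
  rw [homogeneousSubmodule_eq_finsupp_supported, hdeg,
    (AddMonoidAlgebra.supportedEquivFinsupp _).finrank_eq, finrank_finsupp_self]
  simp [Finset.card_finsuppAntidiag_nat_eq_choose]

lemma finrank_homogeneousSubmodule_fin_three_two {K : Type*} [Field K] :
    finrank K (homogeneousSubmodule (Fin 3) K 2) = 6 := by
  rw [finrank_homogeneousSubmodule]
  rfl

instance {σ K : Type*} [Finite σ] [CommSemiring K] (n : ℕ) :
    Module.Finite K (homogeneousSubmodule σ K n) :=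
  Module.Finite.iff_fg.mpr (homogeneousSubmodule_fg σ K n)

lemma LinearMap.range_eq_top_of_forall_exists_apply {K M ι : Type*} [Field K] [AddCommGroup M]
    [Module K M] [Finite ι] [DecidableEq ι] {f : M →ₗ[K] ι → K}
    (h : ∀ i, ∃ x, f x i ≠ 0 ∧ ∀ j ≠ i, f x j = 0) : range f = ⊤ := by
  rw [eq_top_iff, ← (Pi.basisFun K ι).span_eq, span_le]
  rintro _ ⟨i, rfl⟩
  obtain ⟨x, hxi, hx⟩ := h i
  refine ⟨(f x i)⁻¹ • x, funext fun j => ?_⟩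
  by_cases hj : j = i
  · subst hj
    simp [hxi]
  · simp [hx j hj, Pi.single_eq_of_ne hj]

section EvalMap

variable {m : ℕ} {p : Fin m → Fin 3 → ℂ}

lemma evalMap_apply (q : homogeneousSubmodule (Fin 3) ℂ 2) (i : Fin m) :
    evalMap m p q i = eval (p i) q := rfl

lemma mem_ker_evalMap {q : homogeneousSubmodule (Fin 3) ℂ 2} :
    q ∈ ker (evalMap m p) ↔ ∀ i, eval (p i) (q : MvPolynomial (Fin 3) ℂ) = 0 := by
  simp [LinearMap.mem_ker, _root_.funext_iff, evalMap_apply]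

lemma ker_evalMap_eq_bot_iff : ker (evalMap m p) = ⊥ ↔
    ¬ ∃ q : MvPolynomial (Fin 3) ℂ, q ≠ 0 ∧ q.IsHomogeneous 2 ∧ ∀ i, eval (p i) q = 0 := by
  rw [eq_bot_iff]
  constructor
  · rintro h ⟨q, hq0, hq, hqp⟩
    exact hq0 (congrArg Subtype.val (h ((mem_ker_evalMap (q := ⟨q, hq⟩)).mpr hqp)))
  · intro h q hq
    by_contra hq0
    exact h ⟨q, fun h0 => hq0 (Subtype.ext h0), q.2, mem_ker_evalMap.mp hq⟩

lemma ker_evalMap_le_ker_evalMap_comp {k : ℕ} (f : Fin k → Fin m) :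
    ker (evalMap m p) ≤ ker (evalMap k (p ∘ f)) :=
  fun _ hq => mem_ker_evalMap.mpr fun i => mem_ker_evalMap.mp hq (f i)

lemma range_evalMap_comp_eq_top (hne : ∀ i, p i ≠ 0) (hdist : ∀ i j, i ≠ j → p j ∉ ℂ ∙ p i)
    (hfour : ∀ s : Finset (Fin m), s.card = 4 → 2 < finrank ℂ (span ℂ (p '' s)))
    {k : ℕ} {f : Fin k → Fin m} (hf : Function.Injective f) (hk : k ≤ 5) :
    range (evalMap k (p ∘ f)) = ⊤ := by
  refine LinearMap.range_eq_top_of_forall_exists_apply fun i => ?_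
  have hcard : ((Finset.univ.erase i).map ⟨f, hf⟩).card ≤ 4 := by
    rw [Finset.card_map, Finset.card_erase_of_mem (Finset.mem_univ i), Finset.card_univ,
      Fintype.card_fin]
    omega
  obtain ⟨q, hq, hqi, hqs⟩ :=
    exists_quadric_of_card_le_four hne hdist hfour (i := f i) (by simp) hcard
  exact ⟨⟨q, hq⟩, hqi, fun j hj => hqs (f j) (by simp [hf.ne hj])⟩

lemma finrank_ker_evalMap_le_one {p : Fin 6 → Fin 3 → ℂ} (hne : ∀ i, p i ≠ 0)
    (hdist : ∀ i j, i ≠ j → p j ∉ ℂ ∙ p i)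
    (hfour : ∀ s : Finset (Fin 6), s.card = 4 → 2 < finrank ℂ (span ℂ (p '' s))) :
    finrank ℂ (ker (evalMap 6 p)) ≤ 1 := by
  have hrank := finrank_range_add_finrank_ker (evalMap 5 (p ∘ Fin.castSucc))
  rw [range_evalMap_comp_eq_top hne hdist hfour (Fin.castSucc_injective 5) le_rfl,
    finrank_top, finrank_fin_fun, finrank_homogeneousSubmodule_fin_three_two] at hrank
  have := finrank_mono (ker_evalMap_le_ker_evalMap_comp (p := p) Fin.castSucc)
  omega

end EvalMap

theorem stmt_7_general (m : ℕ) (p : Fin m → (Fin 3 → ℂ))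
    (hne : ∀ i, p i ≠ 0)
    (hdist : ∀ i j, i ≠ j → ¬ ∃ c : ℂ, p j = c • p i)
    (h4 : ¬ ∃ (s : Finset (Fin m)) (l : MvPolynomial (Fin 3) ℂ),
      s.card = 4 ∧ l ≠ 0 ∧ l.IsHomogeneous 1 ∧ ∀ i ∈ s, MvPolynomial.eval (p i) l = 0)
    (h7 : ¬ ∃ (s : Finset (Fin m)) (q : MvPolynomial (Fin 3) ℂ),
      s.card = 7 ∧ q ≠ 0 ∧ q.IsHomogeneous 2 ∧ ∀ i ∈ s, MvPolynomial.eval (p i) q = 0) :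
    (7 ≤ m →
      Module.finrank ℂ ((Fin m → ℂ) ⧸ LinearMap.range (evalMap m p)) = m - 6) ∧
    (m ≤ 5 →
      Module.finrank ℂ ((Fin m → ℂ) ⧸ LinearMap.range (evalMap m p)) = 0) ∧
    (m = 6 →
      (((∃ q : MvPolynomial (Fin 3) ℂ,
          q ≠ 0 ∧ q.IsHomogeneous 2 ∧ ∀ i, MvPolynomial.eval (p i) q = 0) →
        Module.finrank ℂ ((Fin m → ℂ) ⧸ LinearMap.range (evalMap m p)) = 1) ∧
       ((¬ ∃ q : MvPolynomial (Fin 3) ℂ,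
          q ≠ 0 ∧ q.IsHomogeneous 2 ∧ ∀ i, MvPolynomial.eval (p i) q = 0) →
        Module.finrank ℂ ((Fin m → ℂ) ⧸ LinearMap.range (evalMap m p)) = 0))) := by
  have hcoker := finrank_quotient_add_finrank (range (evalMap m p))
  have hrank := finrank_range_add_finrank_ker (evalMap m p)
  rw [finrank_fin_fun] at hcoker
  rw [finrank_homogeneousSubmodule_fin_three_two] at hrank
  have hdist' : ∀ i j, i ≠ j → p j ∉ ℂ ∙ p i := fun i j hij h =>
    hdist i j hij (by simpa [mem_span_singleton, eq_comm] using h)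
  have hfour := two_lt_finrank_span_image_of_no_vanishing_linear_form h4
  refine ⟨fun hm => ?_, fun hm => ?_, fun hm => ⟨fun hconic => ?_, fun hconic => ?_⟩⟩
  · obtain ⟨s, -, hs⟩ := Finset.exists_subset_card_eq (s := (Finset.univ : Finset (Fin m)))
      (by simpa using hm)
    have hker : ker (evalMap m p) = ⊥ := ker_evalMap_eq_bot_iff.mpr fun ⟨q, hq0, hq, hqp⟩ =>
      h7 ⟨s, q, hs, hq0, hq, fun i _ => hqp i⟩
    rw [hker, finrank_bot] at hrank
    omega
  · have htop : range (evalMap m p) = ⊤ :=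
      range_evalMap_comp_eq_top hne hdist' hfour Function.injective_id hm
    rw [htop, finrank_top, finrank_fin_fun] at hcoker
    rw [htop]
    omega
  · subst hm
    have hker_pos : 0 < finrank ℂ (ker (evalMap 6 p)) :=
      pos_iff_ne_zero.mpr fun h => ker_evalMap_eq_bot_iff.mp (finrank_eq_zero.mp h) hconic
    have := finrank_ker_evalMap_le_one hne hdist' hfour
    omega
  · rw [ker_evalMap_eq_bot_iff.mpr hconic, finrank_bot] at hrank
    omega

/-- Let `p 0, …, p (m-1)` be distinct points in `ℙ²(ℂ)` with `m ≤ 9`, no four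
of them collinear and no seven lying on a common conic. Let `φ` be the evaluation map of
quadratic forms at the points. Then the cokernel of `φ` has dimension `m − 6` if `m ≥ 7`,
dimension 0 if `m ≤ 5`, and for `m = 6` it has dimension 1 if all six points lie on a conic
and dimension 0 otherwise. -/
theorem stmt_7 (m : ℕ) (hm : m ≤ 9) (p : Fin m → (Fin 3 → ℂ))
    (hne : ∀ i, p i ≠ 0)
    (hdist : ∀ i j, i ≠ j → ¬ ∃ c : ℂ, p j = c • p i)
    (h4 : ¬ ∃ (s : Finset (Fin m)) (l : MvPolynomial (Fin 3) ℂ),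
      s.card = 4 ∧ l ≠ 0 ∧ l.IsHomogeneous 1 ∧ ∀ i ∈ s, MvPolynomial.eval (p i) l = 0)
    (h7 : ¬ ∃ (s : Finset (Fin m)) (q : MvPolynomial (Fin 3) ℂ),
      s.card = 7 ∧ q ≠ 0 ∧ q.IsHomogeneous 2 ∧ ∀ i ∈ s, MvPolynomial.eval (p i) q = 0) :
    (7 ≤ m →
      Module.finrank ℂ ((Fin m → ℂ) ⧸ LinearMap.range (evalMap m p)) = m - 6) ∧
    (m ≤ 5 →
      Module.finrank ℂ ((Fin m → ℂ) ⧸ LinearMap.range (evalMap m p)) = 0) ∧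
    (m = 6 →
      (((∃ q : MvPolynomial (Fin 3) ℂ,
          q ≠ 0 ∧ q.IsHomogeneous 2 ∧ ∀ i, MvPolynomial.eval (p i) q = 0) →
        Module.finrank ℂ ((Fin m → ℂ) ⧸ LinearMap.range (evalMap m p)) = 1) ∧
       ((¬ ∃ q : MvPolynomial (Fin 3) ℂ,
          q ≠ 0 ∧ q.IsHomogeneous 2 ∧ ∀ i, MvPolynomial.eval (p i) q = 0) →
        Module.finrank ℂ ((Fin m → ℂ) ⧸ LinearMap.range (evalMap m p)) = 0))) :=
  stmt_7_general m p hne hdist h4 h7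
end

section
/- For the elliptic curve E: y^2 = x^3 + (u^2 + v)·v^2 over K = C(u, v) (arising from C a conic with two tangent double lines, in the chart z2 = 1, with v = z1), the point P = (−v, u·v) lies on E and has infinite order. -/
set_option maxHeartbeats 1000000
set_option synthInstance.maxHeartbeats 400000

abbrev K13 : Type := FractionRing (MvPolynomial (Fin 2) ℂ)
noncomputable def u13 : K13 := algebraMap (MvPolynomial (Fin 2) ℂ) K13 (MvPolynomial.X 0)
noncomputable def v13 : K13 := algebraMap (MvPolynomial (Fin 2) ℂ) K13 (MvPolynomial.X 1)
noncomputable def W13 : WeierstrassCurve.Affine K13 :=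
  ⟨0, 0, 0, 0, (u13 ^ 2 + v13) * v13 ^ 2⟩

noncomputable instance : CharZero (RatFunc ℂ) :=
  charZero_of_injective_algebraMap (RatFunc.algebraMap_injective ℂ)

namespace Stmt13

abbrev R := MvPolynomial (Fin 2) ℂ
abbrev F := RatFunc ℂ

noncomputable def τ : R →+* F :=
  (algebraMap (Polynomial ℂ) F).comp (MvPolynomial.aeval ![Polynomial.X, -Polynomial.X^2]).toRingHom

noncomputable def ι : R →+* K13 := algebraMap R K13

lemma ι_inj : Function.Injective ι := IsFractionRing.injective R K13

def Res (z : K13) (c : F) : Prop :=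
  ∃ p q : R, τ q ≠ 0 ∧ z * ι q = ι p ∧ c * τ q = τ p

lemma res_map (p : R) : Res (ι p) (τ p) := ⟨p, 1, by simp⟩

lemma res_natCast (n : ℕ) : Res (n : K13) (n : F) := by
  simpa using res_map (n : R)

lemma res_u : Res u13 RatFunc.X := by
  have h := res_map (MvPolynomial.X 0)
  have : τ (MvPolynomial.X 0) = RatFunc.X := by
    simp [τ, RatFunc.algebraMap_X]
  rwa [this] at h

lemma res_v : Res v13 (-RatFunc.X^2) := by
  have h := res_map (MvPolynomial.X 1)
  have : τ (MvPolynomial.X 1) = -RatFunc.X^2 := by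
    simp [τ, RatFunc.algebraMap_X]
  rwa [this] at h

lemma res_add {z w c d} (hz : Res z c) (hw : Res w d) : Res (z + w) (c + d) := by
  obtain ⟨p₁, q₁, h₁, e₁, f₁⟩ := hz
  obtain ⟨p₂, q₂, h₂, e₂, f₂⟩ := hw
  refine ⟨p₁ * q₂ + p₂ * q₁, q₁ * q₂, by simp [mul_ne_zero h₁ h₂], ?_, ?_⟩
  · rw [map_add, map_mul, map_mul, map_mul]
    linear_combination ι q₂ * e₁ + ι q₁ * e₂
  · rw [map_add, map_mul, map_mul, map_mul]
    linear_combination τ q₂ * f₁ + τ q₁ * f₂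

lemma res_mul {z w c d} (hz : Res z c) (hw : Res w d) : Res (z * w) (c * d) := by
  obtain ⟨p₁, q₁, h₁, e₁, f₁⟩ := hz
  obtain ⟨p₂, q₂, h₂, e₂, f₂⟩ := hw
  refine ⟨p₁ * p₂, q₁ * q₂, by simp [mul_ne_zero h₁ h₂], ?_, ?_⟩
  · rw [map_mul, map_mul]
    linear_combination (w * ι q₂) * e₁ + ι p₁ * e₂
  · rw [map_mul, map_mul]
    linear_combination (d * τ q₂) * f₁ + τ p₁ * f₂

lemma res_neg {z c} (hz : Res z c) : Res (-z) (-c) := by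
  obtain ⟨p, q, h, e, f⟩ := hz
  exact ⟨-p, q, h, by rw [map_neg]; linear_combination -e, by rw [map_neg]; linear_combination -f⟩

lemma res_sub {z w c d} (hz : Res z c) (hw : Res w d) : Res (z - w) (c - d) := by
  simpa [sub_eq_add_neg] using res_add hz (res_neg hw)

lemma res_unique {z c d} (hz : Res z c) (hw : Res z d) : c = d := by
  obtain ⟨p₁, q₁, h₁, e₁, f₁⟩ := hz
  obtain ⟨p₂, q₂, h₂, e₂, f₂⟩ := hw
  have key : p₁ * q₂ = p₂ * q₁ := by
    apply ι_inj
    rw [map_mul, map_mul, ← e₁, ← e₂]; ring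
  have h := congrArg τ key
  rw [map_mul, map_mul, ← f₁, ← f₂] at h
  have : (c - d) * (τ q₁ * τ q₂) = 0 := by linear_combination h
  rcases mul_eq_zero.mp this with h' | h'
  · exact sub_eq_zero.mp h'
  · exact absurd h' (mul_ne_zero h₁ h₂)

lemma res_ne_zero {z c} (hz : Res z c) (hc : c ≠ 0) : z ≠ 0 := by
  rintro rfl
  exact hc (res_unique hz ⟨0, 1, by simp, by simp, by simp⟩)

lemma res_div {z w c d} (hz : Res z c) (hw : Res w d) (hd : d ≠ 0) : Res (z / w) (c / d) := by
  obtain ⟨p₁, q₁, h₁, e₁, f₁⟩ := hz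
  obtain ⟨p₂, q₂, h₂, e₂, f₂⟩ := hw
  have hτp₂ : τ p₂ ≠ 0 := by rw [← f₂]; exact mul_ne_zero hd h₂
  have hp₂ : ι p₂ ≠ 0 := fun h => hτp₂ (by rw [← map_zero τ, ← ι_inj (h.trans (map_zero ι).symm)])
  have hw0 : w ≠ 0 := by
    rintro rfl
    rw [zero_mul] at e₂
    exact hp₂ e₂.symm
  have hq₂ : ι q₂ ≠ 0 := fun h => h₂ (by rw [← map_zero τ, ← ι_inj (h.trans (map_zero ι).symm)])
  refine ⟨p₁ * q₂, q₁ * p₂, by rw [map_mul]; exact mul_ne_zero h₁ hτp₂, ?_, ?_⟩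
  · rw [map_mul, map_mul]
    field_simp
    linear_combination (w * ι q₂) * e₁ + (- z * ι q₁) * e₂
  · rw [map_mul, map_mul]
    field_simp
    linear_combination (d * τ q₂) * f₁ + (- c * τ q₁) * f₂

lemma res_congr {z c d} (hz : Res z c) (h : c = d) : Res z d := h ▸ hz

lemma res_pow {z c} (hz : Res z c) (k : ℕ) : Res (z ^ k) (c ^ k) := by
  induction k with
  | zero => simpa using res_natCast 1
  | succ k ih => rw [pow_succ, pow_succ]; exact res_mul ih hz

/-! ### The curve and the point -/

lemma a1 : W13.a₁ = 0 := rfl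
lemma a2 : W13.a₂ = 0 := rfl
lemma a3 : W13.a₃ = 0 := rfl
lemma a4 : W13.a₄ = 0 := rfl
lemma a6 : W13.a₆ = (u13 ^ 2 + v13) * v13 ^ 2 := rfl

lemma res_x1 : Res (-v13) (RatFunc.X ^ 2) := res_congr (res_neg res_v) (by ring)
lemma res_y1 : Res (u13 * v13) (-RatFunc.X ^ 3) := res_congr (res_mul res_u res_v) (by ring)

lemma hX : (RatFunc.X : F) ≠ 0 := RatFunc.X_ne_zero

lemma huv : u13 * v13 ≠ 0 :=
  mul_ne_zero (res_ne_zero res_u hX)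
    (res_ne_zero res_v (neg_ne_zero.mpr (pow_ne_zero 2 hX)))

lemma hP : W13.Nonsingular (-v13) (u13 * v13) := by
  rw [WeierstrassCurve.Affine.nonsingular_iff, WeierstrassCurve.Affine.equation_iff]
  simp only [a1, a2, a3, a4, a6]
  refine ⟨by ring, Or.inr ?_⟩
  intro hcon
  apply huv
  linear_combination hcon / 2

open WeierstrassCurve.Affine in
lemma key (n : ℕ) (hn : 1 ≤ n) : ∃ (x y : K13) (h : W13.Nonsingular x y),
    n • (WeierstrassCurve.Affine.Point.some _ _ hP) = .some _ _ h ∧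
      Res x (RatFunc.X ^ 2 / (n : F) ^ 2) ∧ Res y (-RatFunc.X ^ 3 / (n : F) ^ 3) := by
  induction n, hn using Nat.le_induction with
  | base =>
    exact ⟨-v13, u13 * v13, hP, by rw [one_nsmul],
      res_congr res_x1 (by norm_num), res_congr res_y1 (by norm_num)⟩
  | succ n hn ih =>
    obtain ⟨x, y, h, hEq, hx, hy⟩ := ih
    have hNn : ((n : F)) ≠ 0 := Nat.cast_ne_zero.mpr (by omega)
    have hN1 : ((n : F) + 1) ≠ 0 := by
      intro h0
      have h1 : ((n + 1 : ℕ) : F) = ((0 : ℕ) : F) := by push_cast; linear_combination h0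
      have := Nat.cast_injective h1
      omega
    have hX2 : (RatFunc.X : F) ^ 2 ≠ 0 := pow_ne_zero 2 hX
    have hX3 : (RatFunc.X : F) ^ 3 ≠ 0 := pow_ne_zero 3 hX
    by_cases hxx : x = -v13
    · subst hxx
      rcases Y_eq_of_X_eq h.1 hP.1 rfl with hy2 | hy2
      · -- y = u·v : forces n = 1, then doubling
        subst hy2
        have h1 : -RatFunc.X ^ 3 / (n : F) ^ 3 = -RatFunc.X ^ 3 := res_unique hy res_y1
        have h1' : -RatFunc.X ^ 3 = -RatFunc.X ^ 3 * (n : F) ^ 3 :=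
          (div_eq_iff (pow_ne_zero 3 hNn)).mp h1
        have hcast : ((n ^ 3 : ℕ) : F) = ((1 : ℕ) : F) := by
          push_cast
          exact (mul_left_cancel₀ (neg_ne_zero.mpr hX3) (by linear_combination h1')).symm
        have h3 : n ^ 3 = 1 := Nat.cast_injective hcast
        have hn1 : n = 1 := by
          rcases Nat.lt_or_ge n 2 with h' | h'
          · omega
          · exact absurd h3 (by have := Nat.pow_le_pow_left h' 3; omega)
        subst hn1
        have hyne : u13 * v13 ≠ W13.negY (-v13) (u13 * v13) := by
          simp only [negY, a1, a3]
          intro hcon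
          exact huv (by linear_combination hcon / 2)
        have hslope : Res (W13.slope (-v13) (-v13) (u13 * v13) (u13 * v13))
            (3 * RatFunc.X ^ 4 / (-2 * RatFunc.X ^ 3)) := by
          rw [slope_of_Y_ne rfl hyne]
          have he : 3 * (-v13) ^ 2 + 2 * W13.a₂ * (-v13) + W13.a₄ - W13.a₁ * (u13 * v13) =
              3 * (-v13) ^ 2 := by rw [a1, a2, a4]; ring
          have he2 : u13 * v13 - W13.negY (-v13) (u13 * v13) = 2 * (u13 * v13) := by
            simp only [negY, a1, a3]; ring
          rw [he, he2]
          refine res_congr (res_div (res_mul (res_natCast 3) (res_pow res_x1 2))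
            (res_mul (res_natCast 2) res_y1) ?_) ?_
          · intro h0
            rw [mul_eq_zero] at h0
            rcases h0 with h0 | h0
            · exact two_ne_zero h0
            · exact neg_ne_zero.mpr hX3 h0
          · push_cast; ring
        refine ⟨_, _, nonsingular_add h hP fun h' => hyne h'.2, ?_, ?_, ?_⟩
        · rw [succ_nsmul, hEq, Point.add_of_Y_ne hyne]
        · -- x-coordinate of 2P
          have hax : W13.addX (-v13) (-v13) (W13.slope (-v13) (-v13) (u13 * v13) (u13 * v13)) =
              W13.slope (-v13) (-v13) (u13 * v13) (u13 * v13) ^ 2 + v13 + v13 := by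
            simp only [addX, a1, a2]; ring
          rw [hax]
          refine res_congr (res_add (res_add (res_pow hslope 2) res_v) res_v) ?_
          push_cast
          field_simp
          ring
        · -- y-coordinate of 2P
          have hay : W13.addY (-v13) (-v13) (u13 * v13)
                (W13.slope (-v13) (-v13) (u13 * v13) (u13 * v13)) =
              -(W13.slope (-v13) (-v13) (u13 * v13) (u13 * v13) *
                ((W13.slope (-v13) (-v13) (u13 * v13) (u13 * v13) ^ 2 + v13 + v13) - (-v13)) +
                u13 * v13) := by
            simp only [addY, negY, negAddY, addX, a1, a2, a3]; ring
          rw [hay]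
          refine res_congr (res_neg (res_add (res_mul hslope
            (res_sub (res_add (res_add (res_pow hslope 2) res_v) res_v) res_x1)) res_y1)) ?_
          push_cast
          field_simp
          ring
      · -- y = negY : impossible since residue would be X³
        exfalso
        rw [hy2] at hy
        have hyneg : Res (W13.negY (-v13) (u13 * v13)) (RatFunc.X ^ 3) := by
          have hne : W13.negY (-v13) (u13 * v13) = -(u13 * v13) := by
            simp only [negY, a1, a3]; ring
          rw [hne]
          exact res_congr (res_neg res_y1) (by ring)
        have h1 : -RatFunc.X ^ 3 / (n : F) ^ 3 = RatFunc.X ^ 3 := res_unique hy hyneg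
        have h1' : -RatFunc.X ^ 3 = RatFunc.X ^ 3 * (n : F) ^ 3 :=
          (div_eq_iff (pow_ne_zero 3 hNn)).mp h1
        have hfac : ((n : F) ^ 3 + 1) * RatFunc.X ^ 3 = 0 := by linear_combination -h1'
        rcases mul_eq_zero.mp hfac with h0 | h0
        · have hc : ((n ^ 3 + 1 : ℕ) : F) = ((0 : ℕ) : F) := by push_cast; linear_combination h0
          have := Nat.cast_injective hc
          omega
        · exact hX3 h0
    · -- chord case : x ≠ x(P)
      have hn2 : n ≠ 1 := by
        rintro rfl
        rw [one_nsmul] at hEq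
        injection hEq with h1 h2
        exact hxx h1.symm
      have hden : RatFunc.X ^ 2 / (n : F) ^ 2 - RatFunc.X ^ 2 ≠ 0 := by
        intro h0
        have h0' : RatFunc.X ^ 2 / (n : F) ^ 2 = RatFunc.X ^ 2 := sub_eq_zero.mp h0
        have h0'' : RatFunc.X ^ 2 = RatFunc.X ^ 2 * (n : F) ^ 2 :=
          (div_eq_iff (pow_ne_zero 2 hNn)).mp h0'
        have hc : ((n ^ 2 : ℕ) : F) = ((1 : ℕ) : F) := by
          push_cast
          exact (mul_left_cancel₀ hX2 (by linear_combination h0'')).symm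
        have h2 := Nat.cast_injective hc
        rcases Nat.lt_or_ge n 2 with h' | h'
        · omega
        · have := Nat.pow_le_pow_left h' 2; omega
      have hslope0 : Res (W13.slope x (-v13) y (u13 * v13))
          ((-RatFunc.X ^ 3 / (n : F) ^ 3 - -RatFunc.X ^ 3) /
            (RatFunc.X ^ 2 / (n : F) ^ 2 - RatFunc.X ^ 2)) := by
        rw [slope_of_X_ne hxx]
        exact res_div (res_sub hy res_y1) (res_sub hx res_x1) hden
      have hslope : Res (W13.slope x (-v13) y (u13 * v13))
          (-(RatFunc.X * ((n : F) ^ 2 + (n : F) + 1)) / ((n : F) * ((n : F) + 1))) := by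
        refine res_congr hslope0 ?_
        rw [div_eq_div_iff hden (mul_ne_zero hNn hN1)]
        field_simp
        ring
      refine ⟨_, _, nonsingular_add h hP fun h' => absurd h'.1 hxx, ?_, ?_, ?_⟩
      · rw [succ_nsmul, hEq, Point.add_of_X_ne hxx]
      · have hax : W13.addX x (-v13) (W13.slope x (-v13) y (u13 * v13)) =
            W13.slope x (-v13) y (u13 * v13) ^ 2 - x + v13 := by
          simp only [addX, a1, a2]; ring
        rw [hax]
        refine res_congr (res_add (res_sub (res_pow hslope 2) hx) res_v) ?_
        push_cast
        field_simp
        ring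
      · have hay : W13.addY x (-v13) y (W13.slope x (-v13) y (u13 * v13)) =
            -(W13.slope x (-v13) y (u13 * v13) *
              ((W13.slope x (-v13) y (u13 * v13) ^ 2 - x + v13) - x) + y) := by
          simp only [addY, negY, negAddY, addX, a1, a2, a3]; ring
        rw [hay]
        refine res_congr (res_neg (res_add (res_mul hslope
          (res_sub (res_add (res_sub (res_pow hslope 2) hx) res_v) hx)) hy)) ?_
        push_cast
        rw [eq_div_iff (pow_ne_zero 3 hN1)]
        have hbig : ((n : F) ^ 7 + (n : F) ^ 8 * 3 + (n : F) ^ 9 * 3 + (n : F) ^ 10) ≠ 0 := by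
          have he : ((n : F) ^ 7 + (n : F) ^ 8 * 3 + (n : F) ^ 9 * 3 + (n : F) ^ 10) =
              (n : F) ^ 7 * ((n : F) + 1) ^ 3 := by ring
          rw [he]
          exact mul_ne_zero (pow_ne_zero 7 hNn) (pow_ne_zero 3 hN1)
        field_simp
        ring

end Stmt13

/-- On the elliptic curve `E : y² = x³ + (u² + v)·v²` over `K = ℂ(u, v)`,
the point `P = (−v, u·v)` lies on `E` and has infinite order in `E(K)`. -/
theorem stmt_13 :
    ∃ h : W13.Nonsingular (-v13) (u13 * v13),
      ¬ IsOfFinAddOrder (WeierstrassCurve.Affine.Point.some _ _ h) := by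
  refine ⟨Stmt13.hP, fun hfin => ?_⟩
  obtain ⟨n, hn, h0⟩ := isOfFinAddOrder_iff_nsmul_eq_zero.mp hfin
  obtain ⟨x, y, h, hEq, -, -⟩ := Stmt13.key n hn
  rw [hEq] at h0
  exact WeierstrassCurve.Affine.Point.some_ne_zero h h0
end
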